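/- Let K be convex with A = {w ∈ S⊥ : ‖w‖ ≤ R} ⊆ K and B = {w ∈ S : ‖w‖ ≤ r} ⊆ K for orthogonal complementary subspaces S, S⊥. Then K contains the Euclidean ball of radius rR/√(r² + R²) centered at the origin. -/

import Mathlib

/-!
Write `x = y + z` with `y ∈ S`, `z ∈ Sᗮ`. By Cauchy–Schwarz, `‖x‖ ≤ rR/√(r² + R²)` forces
`‖y‖/r + ‖z‖/R ≤ 1`. Rescaling `y` and `z` to points `p`, `q` of the two given balls then exhibits
`x = (‖y‖/r) • p + (‖z‖/R) • q + (1 - ‖y‖/r - ‖z‖/R) • 0` as a convex combination of points of `K`.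
-/

theorem Convex.smul_add_smul_mem_of_zero_mem {𝕜 E : Type*} [Field 𝕜] [LinearOrder 𝕜]
    [IsStrictOrderedRing 𝕜] [AddCommGroup E] [Module 𝕜 E] {K : Set E} (hK : Convex 𝕜 K)
    (h0 : (0 : E) ∈ K) {p q : E} (hp : p ∈ K) (hq : q ∈ K) {s t : 𝕜} (hs : 0 ≤ s) (ht : 0 ≤ t)
    (hst : s + t ≤ 1) : s • p + t • q ∈ K := by
  rcases (add_nonneg hs ht).eq_or_lt with hzero | hpos
  · obtain ⟨rfl, rfl⟩ : s = 0 ∧ t = 0 := ⟨by linarith, by linarith⟩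
    simpa using h0
  have hcombo : (s / (s + t)) • p + (t / (s + t)) • q ∈ K :=
    hK hp hq (by positivity) (by positivity) (by rw [← add_div, div_self hpos.ne'])
  convert hK.smul_mem_of_zero_mem h0 hcombo ⟨hpos.le, hst⟩ using 1
  simp only [smul_add, smul_smul, mul_div_cancel₀ _ hpos.ne']

theorem Submodule.exists_mem_norm_le_smul_eq {E : Type*} [NormedAddCommGroup E]
    [NormedSpace ℝ E] {S : Submodule ℝ E} {y : E} (hy : y ∈ S) {r : ℝ} (hr : 0 < r) :
    ∃ p ∈ S, ‖p‖ ≤ r ∧ (‖y‖ / r) • p = y := by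
  rcases eq_or_ne y 0 with rfl | hy0
  · exact ⟨0, S.zero_mem, by simpa using hr.le, by simp⟩
  have hnorm : 0 < ‖y‖ := norm_pos_iff.mpr hy0
  refine ⟨(r / ‖y‖) • y, S.smul_mem _ hy, ?_, ?_⟩
  · rw [norm_smul, Real.norm_of_nonneg (by positivity), div_mul_cancel₀ _ hnorm.ne']
  · rw [smul_smul, div_mul_div_comm, mul_comm, div_self (by positivity), one_smul]

theorem Convex.add_mem_of_norm_div_add_norm_div_le_one {E : Type*} [NormedAddCommGroup E]
    [NormedSpace ℝ E] {K : Set E} (hK : Convex ℝ K) {S T : Submodule ℝ E} {r R : ℝ}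
    (hr : 0 < r) (hR : 0 < R) (hS : {w | w ∈ S ∧ ‖w‖ ≤ r} ⊆ K)
    (hT : {w | w ∈ T ∧ ‖w‖ ≤ R} ⊆ K) {y z : E} (hy : y ∈ S) (hz : z ∈ T)
    (h : ‖y‖ / r + ‖z‖ / R ≤ 1) : y + z ∈ K := by
  obtain ⟨p, hpS, hpr, hpy⟩ := S.exists_mem_norm_le_smul_eq hy hr
  obtain ⟨q, hqT, hqR, hqz⟩ := T.exists_mem_norm_le_smul_eq hz hR
  rw [← hpy, ← hqz]
  exact hK.smul_add_smul_mem_of_zero_mem (hS ⟨S.zero_mem, by simpa using hr.le⟩) (hS ⟨hpS, hpr⟩)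
    (hT ⟨hqT, hqR⟩) (by positivity) (by positivity) h

theorem div_add_div_le_one_of_sq_add_sq_le {a b r R : ℝ} (ha : 0 ≤ a) (hb : 0 ≤ b)
    (hr : 0 < r) (hR : 0 < R) (h : a ^ 2 + b ^ 2 ≤ (r * R) ^ 2 / (r ^ 2 + R ^ 2)) :
    a / r + b / R ≤ 1 := by
  have hcs : (a * R + r * b) ^ 2 ≤ (a ^ 2 + b ^ 2) * (r ^ 2 + R ^ 2) := by
    nlinarith [sq_nonneg (a * r - b * R)]
  have hsq : (a * R + r * b) ^ 2 ≤ (r * R) ^ 2 :=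
    hcs.trans ((le_div_iff₀ (by positivity)).mp h)
  rw [div_add_div _ _ hr.ne' hR.ne', div_le_one (by positivity)]
  exact (pow_le_pow_iff_left₀ (by positivity) (by positivity) two_ne_zero).mp hsq

/-- If a convex set `K` contains the ball of radius `R` in a subspace `S⊥` and the ball of
radius `r` in the orthogonal complement subspace `S`, then `K` contains the Euclidean ball
of radius `rR/√(r² + R²)` centered at the origin. -/
theorem convex_contains_ball_of_two_subspace_balls {d : ℕ}
    (K : Set (EuclideanSpace ℝ (Fin d))) (hK : Convex ℝ K)
    (S : Submodule ℝ (EuclideanSpace ℝ (Fin d)))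
    (R r : ℝ) (hR : 0 < R) (hr : 0 < r)
    (hA : {w : EuclideanSpace ℝ (Fin d) | w ∈ Sᗮ ∧ ‖w‖ ≤ R} ⊆ K)
    (hB : {w : EuclideanSpace ℝ (Fin d) | w ∈ S ∧ ‖w‖ ≤ r} ⊆ K) :
    Metric.closedBall (0 : EuclideanSpace ℝ (Fin d))
      (r * R / Real.sqrt (r ^ 2 + R ^ 2)) ⊆ K := by
  intro x hx
  rw [mem_closedBall_zero_iff] at hx
  have hx2 : ‖x‖ ^ 2 ≤ (r * R) ^ 2 / (r ^ 2 + R ^ 2) := by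
    calc ‖x‖ ^ 2 ≤ (r * R / Real.sqrt (r ^ 2 + R ^ 2)) ^ 2 := by gcongr
      _ = (r * R) ^ 2 / (r ^ 2 + R ^ 2) := by rw [div_pow, Real.sq_sqrt (by positivity)]
  rw [S.norm_sq_eq_add_norm_sq_starProjection x] at hx2
  rw [← S.starProjection_add_starProjection_orthogonal x]
  exact hK.add_mem_of_norm_div_add_norm_div_le_one hr hR hB hA (S.starProjection_apply_mem x)
    (Sᗮ.starProjection_apply_mem x)
    (div_add_div_le_one_of_sq_add_sq_le (norm_nonneg _) (norm_nonneg _) hr hR hx2)
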